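/- arXiv:1408.7014 — 3 statements merged into one kernel-verified Lean document; each statement's English description precedes it below -/
import Mathlib

section
/- For a finite field F_q and i ≥ 1, there is a bijection between the set of elements α of F_{q^i} satisfying F_q(α) = F_{q^i} and the set of i-tuples in F_q^i whose orbit under cyclic shift has exactly i elements, given by taking coordinates with respect to a normal basis {θ, θ^q, …, θ^{q^{i-1}}} of F_{q^i} over F_q. -/
/-- For a finite field `F_q` and `i ≥ 1`, taking coordinates with respect to a normal basis
`{θ, θ^q, …, θ^{q^{i-1}}}` of `F_{q^i}` over `F_q` gives a bijection between the set of
elements `α` of `F_{q^i}` with `F_q(α) = F_{q^i}` and the set of `i`-tuples over `F_q`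
whose orbit under cyclic shift has exactly `i` elements. -/
theorem stmt1 (Fq : Type*) [Field Fq] [Fintype Fq] (q : ℕ) (hq : q = Fintype.card Fq)
    (F : Type*) [Field F] [Algebra Fq F] (i : ℕ) (hi : 0 < i)
    (hdim : Module.finrank Fq F = i)
    (θ : F) (b : Module.Basis (Fin i) Fq F) (hb : ∀ k : Fin i, b k = θ ^ q ^ (k : ℕ)) :
    Set.BijOn (fun α : F => fun k : Fin i => b.repr α k)
      {α : F | Algebra.adjoin Fq {α} = ⊤}
      {v : Fin i → Fq |
        Set.ncard {w : Fin i → Fq | ∃ j : Fin i, w = fun k => v (k + j)} = i} := by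
  classical
  haveI : NeZero i := ⟨hi.ne'⟩
  haveI : Fintype F := Module.fintypeOfFintype b
  have hq2 : 2 ≤ q := by rw [hq]; exact Fintype.one_lt_card
  set p := ringChar Fq with hp
  haveI hpc : CharP Fq p := ringChar.charP Fq
  haveI hpf : Fact p.Prime := ⟨CharP.char_is_prime Fq p⟩
  obtain ⟨n, -, hcard⟩ := FiniteField.card Fq p
  have hqpn : q = p ^ (n : ℕ) := by rw [hq, hcard]
  haveI : CharP F p := charP_of_injective_algebraMap (algebraMap Fq F).injective p
  haveI : ExpChar F p := .prime hpf.out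
  -- small field elements are fixed by q-power maps
  have cfix : ∀ (c : Fq) (m : ℕ), c ^ q ^ m = c := by
    intro c m
    induction m with
    | zero => simp
    | succ m ih => rw [pow_succ, pow_mul, ih, hq, FiniteField.pow_card]
  -- the q^m-power map as an algebra homomorphism
  have hσ : ∀ m : ℕ, ∃ s : F →ₐ[Fq] F, ∀ x : F, s x = x ^ q ^ m := by
    intro m
    have hiter : ∀ x : F, iterateFrobenius F p ((n : ℕ) * m) x = x ^ q ^ m := by
      intro x
      rw [iterateFrobenius_def, hqpn, ← pow_mul]
    refine ⟨AlgHom.mk' (iterateFrobenius F p ((n : ℕ) * m)) ?_, hiter⟩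
    intro c x
    rw [Algebra.smul_def, Algebra.smul_def, map_mul, hiter, hiter, ← map_pow, cfix]
  have hcardF : Fintype.card F = q ^ i := by
    rw [Module.card_fintype b, ← hq, Fintype.card_fin]
  have allfix : ∀ x : F, x ^ q ^ i = x := by
    intro x; rw [← hcardF]; exact FiniteField.pow_card x
  have per : ∀ (m : ℕ) (x : F), x ^ q ^ m = x ^ q ^ (m % i) := by
    intro m
    induction m using Nat.strong_induction_on with
    | _ m ih =>
      intro x
      rcases lt_or_ge m i with h | h
      · rw [Nat.mod_eq_of_lt h]
      · have h2 : x ^ q ^ m = (x ^ q ^ (m - i)) ^ q ^ i := by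
          rw [← pow_mul, ← pow_add, Nat.sub_add_cancel h]
        rw [h2, allfix, ih (m - i) (by omega), Nat.mod_eq_sub_mod h]
  have injpow : ∀ m : ℕ, Function.Injective fun x : F => x ^ q ^ m := by
    intro m
    obtain ⟨s, hs⟩ := hσ m
    have he : (fun x : F => x ^ q ^ m) = ⇑s := by funext x; rw [hs]
    rw [he]
    exact s.toRingHom.injective
  -- the key coordinate computation
  have coords : ∀ (α : F) (j m : Fin i), b.repr (α ^ q ^ (j : ℕ)) m = b.repr α (m - j) := by
    intro α j m
    obtain ⟨s, hs⟩ := hσ (j : ℕ)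
    have hbk : ∀ k : Fin i, (b k) ^ q ^ (j : ℕ) = b (k + j) := by
      intro k
      rw [hb k, hb (k + j), ← pow_mul, ← pow_add, per, Fin.val_add]
    have e1 : α ^ q ^ (j : ℕ) = b.equivFun.symm (fun m => b.repr α (m - j)) := by
      conv_lhs => rw [← b.sum_repr α, ← hs, map_sum]
      rw [Module.Basis.equivFun_symm_apply]
      refine Fintype.sum_equiv (Equiv.addRight j) _ _ ?_
      intro k
      rw [map_smul, hs, hbk]
      show b.repr α k • b (k + j) = b.repr α (k + j - j) • b (k + j)
      rw [add_sub_cancel_right]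
    have e2 : ⇑(b.repr (b.equivFun.symm (fun m => b.repr α (m - j)))) =
        fun m => b.repr α (m - j) := by
      rw [← Module.Basis.equivFun_apply, LinearEquiv.apply_symm_apply]
    rw [e1]
    exact congrFun e2 m
  have hΦinj : Function.Injective (fun β : F => fun k : Fin i => b.repr β k) := by
    intro x y hxy
    apply b.repr.injective
    ext k
    exact congrFun hxy k
  -- the pointwise characterization
  have hpt : ∀ α : F, Algebra.adjoin Fq {α} = ⊤ ↔
      Set.ncard {w : Fin i → Fq | ∃ j : Fin i, w = fun k => b.repr α (k + j)} = i := by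
    intro α
    set f : Fin i → F := fun j => α ^ q ^ (j : ℕ) with hf
    have hset : {w : Fin i → Fq | ∃ j : Fin i, w = fun k => b.repr α (k + j)} =
        (fun β : F => fun k : Fin i => b.repr β k) '' Set.range f := by
      ext w
      simp only [Set.mem_setOf_eq, Set.mem_image, Set.mem_range]
      constructor
      · rintro ⟨j, rfl⟩
        refine ⟨f (-j), ⟨-j, rfl⟩, ?_⟩
        funext m
        rw [hf]
        rw [coords α (-j) m, sub_neg_eq_add]
      · rintro ⟨β, ⟨j, rfl⟩, rfl⟩
        refine ⟨-j, ?_⟩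
        funext m
        rw [hf]
        rw [coords α j m, sub_eq_add_neg]
    have hC : Set.ncard (Set.range f) = i ↔ Function.Injective f := by
      constructor
      · intro h x y hxy
        rw [Set.ncard_eq_toFinset_card', Set.toFinset_range] at h
        have h1 : (Finset.image f Finset.univ).card = (Finset.univ : Finset (Fin i)).card := by
          rw [h, Finset.card_univ, Fintype.card_fin]
        exact Finset.card_image_iff.mp h1 (by simp) (by simp) hxy
      · intro h
        rw [← Nat.card_coe_set_eq, Nat.card_range_of_injective h,
          Nat.card_eq_fintype_card, Fintype.card_fin]
    -- main equivalence
    have key : ∀ d : ℕ, 0 < d → d < i → α ^ q ^ d = α → Algebra.adjoin Fq {α} ≠ ⊤ := by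
      intro d hd0 hdi hfix htop
      obtain ⟨s, hs⟩ := hσ d
      have hall : ∀ x : F, x ^ q ^ d = x := by
        intro x
        have hle : Algebra.adjoin Fq {α} ≤ AlgHom.equalizer s (AlgHom.id Fq F) := by
          apply Algebra.adjoin_le
          intro y hy
          rcases hy with rfl
          rw [SetLike.mem_coe, AlgHom.mem_equalizer, hs, hfix, AlgHom.id_apply]
        rw [htop] at hle
        have hmem : x ∈ AlgHom.equalizer s (AlgHom.id Fq F) := hle trivial
        rw [AlgHom.mem_equalizer, hs, AlgHom.id_apply] at hmem
        exact hmem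
      have h1 : 1 < q ^ d := Nat.one_lt_pow hd0.ne' (by omega)
      have hroots : (Finset.univ : Finset F) ⊆
          (Polynomial.X ^ (q ^ d) - Polynomial.X : Polynomial F).roots.toFinset := by
        intro x _
        rw [Multiset.mem_toFinset, Polynomial.mem_roots']
        refine ⟨FiniteField.X_pow_card_sub_X_ne_zero F h1, ?_⟩
        simp [Polynomial.IsRoot, hall x]
      have hc1 := Finset.card_le_card hroots
      rw [Finset.card_univ] at hc1
      have hc2 : (Polynomial.X ^ (q ^ d) - Polynomial.X : Polynomial F).roots.toFinset.card
          ≤ q ^ d := by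
        refine le_trans (Multiset.toFinset_card_le _) (le_trans (Polynomial.card_roots' _) ?_)
        rw [FiniteField.X_pow_card_sub_X_natDegree_eq F h1]
      have hlt : q ^ d < q ^ i := Nat.pow_lt_pow_right (by omega) hdi
      omega
    have hD : Function.Injective f ↔ Algebra.adjoin Fq {α} = ⊤ := by
      constructor
      · intro hinj
        by_contra hK
        haveI : FiniteDimensional Fq F := Module.Finite.of_basis b
        set K := Algebra.adjoin Fq {α} with hKdef
        have hltK : Subalgebra.toSubmodule K < ⊤ := by
          rcases lt_or_eq_of_le (le_top (a := Subalgebra.toSubmodule K)) with h | h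
          · exact h
          · exfalso
            apply hK
            rw [Algebra.eq_top_iff]
            intro x
            rw [← Subalgebra.mem_toSubmodule, h]
            trivial
        set d := Module.finrank Fq K with hd
        have hdi : d < i := by
          have := Submodule.finrank_lt hltK.ne
          rw [hdim] at this
          exact this
        haveI : Nontrivial K :=
          ⟨⟨0, 1, fun h => zero_ne_one (α := F) (by simpa using congrArg Subtype.val h)⟩⟩
        have hd0 : 0 < d := Module.finrank_pos
        haveI : Fintype K := Fintype.ofFinite K
        have hcK : Fintype.card K = q ^ d := by
          rw [Module.card_fintype (Module.finBasis Fq K), ← hq, Fintype.card_fin]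
        letI : Field K := Fintype.fieldOfDomain K
        have hαK := FiniteField.pow_card (⟨α, Algebra.self_mem_adjoin_singleton Fq α⟩ : K)
        have hfix : α ^ q ^ d = α := by
          have h2 := congrArg Subtype.val hαK
          rw [hcK] at h2
          simpa using h2
        have hfe : f ⟨d, hdi⟩ = f ⟨0, hi⟩ := by
          show α ^ q ^ d = α ^ q ^ 0
          rw [hfix, pow_zero, pow_one]
        have := hinj hfe
        rw [Fin.mk.injEq] at this
        omega
      · intro htop a c hac
        by_contra hne
        have hne' : (a : ℕ) ≠ (c : ℕ) := fun h => hne (Fin.ext h)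
        have main : ∀ a c : Fin i, (a : ℕ) < (c : ℕ) →
            α ^ q ^ (a : ℕ) = α ^ q ^ (c : ℕ) → False := by
          intro a c hlt heq
          have h3 : (α ^ q ^ ((c : ℕ) - (a : ℕ))) ^ q ^ (a : ℕ) = α ^ q ^ (a : ℕ) := by
            rw [← pow_mul, ← pow_add, show (c : ℕ) - (a : ℕ) + (a : ℕ) = (c : ℕ) by omega]
            exact heq.symm
          have hfix : α ^ q ^ ((c : ℕ) - (a : ℕ)) = α := injpow (a : ℕ) h3
          exact key _ (by omega) (by omega) hfix htop
        rcases lt_or_gt_of_ne hne' with h | h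
        · exact main a c h hac
        · exact main c a h hac.symm
    rw [hset, Set.ncard_image_of_injective _ hΦinj, hC, hD]
  -- assemble the bijection
  refine ⟨fun α hα => ?_, fun x _ y _ hxy => hΦinj hxy, fun v hv => ?_⟩
  · exact (hpt α).mp hα
  · have hΦv : ∀ k, b.repr (b.equivFun.symm v) k = v k := by
      intro k
      have h4 : ⇑(b.repr (b.equivFun.symm v)) = v := by
        rw [← Module.Basis.equivFun_apply, LinearEquiv.apply_symm_apply]
      exact congrFun h4 k
    refine ⟨b.equivFun.symm v, ?_, funext fun k => hΦv k⟩
    apply (hpt _).mpr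
    have hsets : {w : Fin i → Fq | ∃ j : Fin i, w = fun k => b.repr (b.equivFun.symm v) (k + j)}
        = {w : Fin i → Fq | ∃ j : Fin i, w = fun k => v (k + j)} := by
      apply congrArg
      funext w
      simp only [hΦv]
    rw [hsets]
    exact hv
end

section
/- Let P_b(T) = T^n + b_{n−1}T^{n−1} + ⋯ + b_0 be a monic polynomial of degree n over an algebraically closed field, with coefficient vector b ∈ A^n. The set of b ∈ A^n for which P_b has a root of multiplicity at least three is contained in a closed subvariety of A^n of codimension 2. -/
set_option synthInstance.maxHeartbeats 1000000
set_option maxHeartbeats 1000000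

noncomputable section AuxStmt12

universe u v

namespace Stmt12Aux

section P4
open Polynomial
noncomputable def mon {R : Type*} [CommRing R] (d : ℕ) (b : Fin d → R) : Polynomial R :=
  Polynomial.X ^ d + ∑ k : Fin d, Polynomial.C (b k) * Polynomial.X ^ (k : ℕ)

open Polynomial

variable {R : Type*} [CommRing R]

theorem mon_monic (d : ℕ) (b : Fin d → R) : (mon d b).Monic := by
  apply monic_X_pow_add
  refine (degree_sum_le _ _).trans_lt ?_
  rw [Finset.sup_lt_iff (by exact WithBot.bot_lt_coe d)]
  intro k _
  refine (degree_C_mul_X_pow_le _ _).trans_lt ?_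
  exact_mod_cast k.2

theorem mon_natDegree (d : ℕ) (b : Fin d → R) [Nontrivial R] : (mon d b).natDegree = d := by
  have h : degree (∑ k : Fin d, Polynomial.C (b k) * Polynomial.X ^ (k : ℕ)) < (X ^ d : R[X]).degree := by
    rw [degree_X_pow]
    refine (degree_sum_le _ _).trans_lt ?_
    rw [Finset.sup_lt_iff (by exact WithBot.bot_lt_coe d)]
    intro k _
    refine (degree_C_mul_X_pow_le _ _).trans_lt ?_
    exact_mod_cast k.2
  rw [mon, natDegree_add_eq_left_of_degree_lt (by rw [degree_X_pow]; rw [degree_X_pow] at h; exact h)]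
  exact natDegree_X_pow d
  
theorem mon_coeff_lt (d : ℕ) (b : Fin d → R) (k : Fin d) : (mon d b).coeff k = b k := by
  rw [mon, coeff_add, coeff_X_pow]
  have h1 : (if (k : ℕ) = d then (1:R) else 0) = 0 := by
    simp [Nat.ne_of_lt k.2]
  rw [h1, zero_add]
  rw [finset_sum_coeff]
  rw [Finset.sum_eq_single k]
  · simp [coeff_X_pow]
  · intro j _ hj
    simp only [coeff_C_mul, coeff_X_pow]
    have : ¬ ((k:ℕ) = (j:ℕ)) := fun h => hj (Fin.ext h.symm)
    simp [this]
  · simp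

theorem monic_eq_mon {q : R[X]} [Nontrivial R] (d : ℕ) (hq : q.Monic) (hd : q.natDegree = d) :
    q = mon d (fun k => q.coeff k) := by
  ext i
  rcases lt_trichotomy i d with h | h | h
  · rw [mon_coeff_lt d _ ⟨i, h⟩]
  · subst h
    rw [mon, coeff_add, coeff_X_pow, if_pos rfl]
    have h2 : (∑ k : Fin i, Polynomial.C (q.coeff k) * Polynomial.X ^ (k : ℕ)).coeff i = 0 := by
      rw [finset_sum_coeff]
      apply Finset.sum_eq_zero
      intro j _
      simp only [coeff_C_mul, coeff_X_pow]
      have : ¬ ((i:ℕ) = (j:ℕ)) := Nat.ne_of_gt j.2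
      simp [this]
    rw [h2, add_zero]
    have := hq.coeff_natDegree
    rw [hd] at this
    rw [this]
  · rw [coeff_eq_zero_of_natDegree_lt (by omega : q.natDegree < i),
      coeff_eq_zero_of_natDegree_lt (by rw [mon_natDegree]; omega)]

theorem mon_map {S : Type*} [CommRing S] (f : R →+* S) (d : ℕ) (b : Fin d → R) :
    (mon d b).map f = mon d (fun k => f (b k)) := by
  rw [mon, mon, Polynomial.map_add, Polynomial.map_pow, map_X, Polynomial.map_sum]
  congr 1
  refine Finset.sum_congr rfl fun k _ => ?_
  rw [Polynomial.map_mul, map_C, Polynomial.map_pow, map_X]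

end P4

open MvPolynomial

section P1
variable {K : Type u} [Field K]

theorem totalDegree_aeval_le {k m : ℕ} (f : Fin k → MvPolynomial (Fin m) K)
    (D : ℕ) (hD : ∀ i, (f i).totalDegree ≤ D) (F : MvPolynomial (Fin k) K) :
    (aeval f F).totalDegree ≤ F.totalDegree * D := by
  have hrw : aeval f F = ∑ d ∈ F.support, aeval f (monomial d (F.coeff d)) := by
    conv_lhs => rw [F.as_sum]
    rw [map_sum]
  rw [hrw]
  refine (totalDegree_finset_sum _ _).trans (Finset.sup_le fun d hd => ?_)
  rw [aeval_monomial]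
  refine (totalDegree_mul _ _).trans ?_
  have h1 : (algebraMap K (MvPolynomial (Fin m) K) (F.coeff d)).totalDegree = 0 := by
    simpa using totalDegree_C (R := K) (σ := Fin m) (F.coeff d)
  rw [h1, zero_add]
  refine (le_trans (by
    classical
    simpa [Finsupp.prod] using totalDegree_finset_prod d.support (fun i => f i ^ d i)) ?_)
  calc ∑ i ∈ d.support, (f i ^ d i).totalDegree
      ≤ ∑ i ∈ d.support, d i * D := by
        refine Finset.sum_le_sum fun i _ => ?_
        exact (totalDegree_pow _ _).trans (Nat.mul_le_mul_left _ (hD i))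
    _ = (∑ i ∈ d.support, d i) * D := by rw [Finset.sum_mul]
    _ ≤ F.totalDegree * D := Nat.mul_le_mul_right _ (le_totalDegree hd)

lemma finsupp_le_sum {k : ℕ} (d : Fin k →₀ ℕ) (i : Fin k) : d i ≤ d.sum fun _ e => e := by
  by_cases h : d i = 0
  · simp [h]
  · exact Finset.single_le_sum (f := fun j => d j) (fun _ _ => Nat.zero_le _)
      (Finsupp.mem_support_iff.2 h)

noncomputable instance degFintype (k N : ℕ) :
    Fintype {n : Fin k →₀ ℕ | (n.sum fun _ e => e) ≤ N} := by
  apply Fintype.ofInjective (f := fun d : {n : Fin k →₀ ℕ | (n.sum fun _ e => e) ≤ N} =>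
    fun i => (⟨d.1 i, Nat.lt_succ_of_le ((finsupp_le_sum d.1 i).trans d.2)⟩ : Fin (N+1)))
  intro d₁ d₂ h
  ext i
  exact congrArg Fin.val (congrFun h i)

lemma degCard_le (k N : ℕ) :
    Fintype.card {n : Fin k →₀ ℕ | (n.sum fun _ e => e) ≤ N} ≤ (N+1)^k := by
  have := Fintype.card_le_of_injective (f := fun d : {n : Fin k →₀ ℕ | (n.sum fun _ e => e) ≤ N} =>
    fun i => (⟨d.1 i, Nat.lt_succ_of_le ((finsupp_le_sum d.1 i).trans d.2)⟩ : Fin (N+1)))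
    (by intro d₁ d₂ h; ext i; exact congrArg Fin.val (congrFun h i))
  simpa using this

lemma le_degCard (k t : ℕ) :
    (t+1)^k ≤ Fintype.card {n : Fin k →₀ ℕ | (n.sum fun _ e => e) ≤ k*t} := by
  have hinj : Function.Injective (fun (g : Fin k → Fin (t+1)) =>
      (⟨Finsupp.equivFunOnFinite.symm (fun i => (g i : ℕ)), by
        simp only [Set.mem_setOf_eq]
        rw [Finsupp.sum_fintype _ _ (fun _ => rfl)]
        calc ∑ i : Fin k, ((Finsupp.equivFunOnFinite.symm fun i => ((g i : ℕ))) i)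
            = ∑ i : Fin k, (g i : ℕ) := Finset.sum_congr rfl fun _ _ => rfl
          _ ≤ ∑ _i : Fin k, t := Finset.sum_le_sum fun i _ => Nat.lt_succ_iff.1 (g i).2
          _ = k * t := by simp [Finset.sum_const, mul_comm]
        ⟩ : {n : Fin k →₀ ℕ | (n.sum fun _ e => e) ≤ k*t})) := by
    intro g₁ g₂ h
    have := congrArg Subtype.val h
    have h2 := Finsupp.equivFunOnFinite.symm.injective this
    funext i
    exact Fin.val_injective (congrFun h2 i)
  simpa only [Fintype.card_fun, Fintype.card_fin] using Fintype.card_le_of_injective _ hinj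

lemma finrank_restrictTotalDegree (k N : ℕ) :
    Module.finrank K (restrictTotalDegree (Fin k) K N) =
      Fintype.card {n : Fin k →₀ ℕ | (n.sum fun _ e => e) ≤ N} :=
  Module.finrank_eq_card_basis (basisRestrictSupport K _)

theorem not_algIndep_succ (m : ℕ) (f : Fin (m+1) → MvPolynomial (Fin m) K) :
    ¬ AlgebraicIndependent K f := by
  intro h
  have hinj : Function.Injective (aeval f : MvPolynomial (Fin (m+1)) K →ₐ[K] _) :=
    algebraicIndependent_iff_injective_aeval.1 h
  set D : ℕ := Finset.univ.sup (fun i => (f i).totalDegree) with hDdef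
  have hD : ∀ i, (f i).totalDegree ≤ D := fun i => by rw [hDdef]; exact Finset.le_sup (f := fun j => (f j).totalDegree) (Finset.mem_univ i)
  have hM : m + 1 = m + 1 := rfl
  set E : ℕ := (m+1) * (D + 1)
  set t : ℕ := E ^ m + 1
  set N : ℕ := (m+1) * t
  -- the restricted linear map
  have hmem : ∀ x ∈ restrictTotalDegree (Fin (m+1)) K N,
      (aeval f).toLinearMap x ∈ restrictTotalDegree (Fin m) K (N * D) := by
    intro x hx
    rw [mem_restrictTotalDegree] at hx ⊢
    exact (totalDegree_aeval_le f D hD x).trans (Nat.mul_le_mul_right _ hx)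
  let Φ : restrictTotalDegree (Fin (m+1)) K N →ₗ[K] restrictTotalDegree (Fin m) K (N * D) :=
    LinearMap.codRestrict _ ((aeval f).toLinearMap.domRestrict _) (fun c => hmem c.1 c.2)
  have hΦinj : Function.Injective Φ := by
    intro a b hab
    have : (aeval f) a.1 = (aeval f) b.1 := congrArg Subtype.val hab
    exact Subtype.ext (hinj this)
  have hrank := LinearMap.finrank_le_finrank_of_injective hΦinj
  rw [finrank_restrictTotalDegree, finrank_restrictTotalDegree] at hrank
  -- numeric contradiction
  have low : (t + 1) ^ (m+1) ≤ Fintype.card {n : Fin (m+1) →₀ ℕ | (n.sum fun _ e => e) ≤ N} :=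
    le_degCard (m+1) t
  have high : Fintype.card {n : Fin m →₀ ℕ | (n.sum fun _ e => e) ≤ N * D} ≤ (N * D + 1) ^ m :=
    degCard_le m (N * D)
  have key : (N * D + 1) ^ m < (t + 1) ^ (m+1) := by
    have h1 : N * D + 1 ≤ t * E := by
      have : N * D + 1 ≤ N * D + N := by
        have : 1 ≤ N := Nat.le_mul_of_pos_right (m+1) (by positivity) |>.trans' (by omega)
        omega
      calc N * D + 1 ≤ N * D + N := this
        _ = N * (D + 1) := by ring
        _ = t * E := by simp only [N, E]; ring
    calc (N * D + 1) ^ m ≤ (t * E) ^ m := Nat.pow_le_pow_left h1 m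
      _ = t ^ m * E ^ m := by rw [mul_pow]
      _ < t ^ m * t := mul_lt_mul_of_pos_left (by omega) (by positivity)
      _ = t ^ (m+1) := by rw [← pow_succ]
      _ ≤ (t + 1) ^ (m+1) := Nat.pow_le_pow_left (by omega) (m+1)
  omega

end P1

section P2
variable {K : Type u} [Field K]

theorem indep_option {D : Type*} [CommRing D] [IsDomain D] [Algebra K D]
    (p : Ideal D) [p.IsPrime] {k : ℕ} (y : Fin k → D)
    (hy : AlgebraicIndependent K ((Ideal.Quotient.mkₐ K p) ∘ y))
    (a : D) (ha : a ∈ p) (ha0 : a ≠ 0) :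
    AlgebraicIndependent K (fun o : Option (Fin k) => o.elim a y) := by
  have hyD : AlgebraicIndependent K y := AlgebraicIndependent.of_comp _ hy
  rw [hyD.option_iff_transcendental, transcendental_iff]
  suffices H : ∀ (n : ℕ) (q : Polynomial (Algebra.adjoin K (Set.range y))),
      q.natDegree ≤ n → Polynomial.aeval a q = 0 → q = 0 by
    exact fun q hq => H q.natDegree q le_rfl hq
  have hcoeff0 : ∀ q : Polynomial (Algebra.adjoin K (Set.range y)),
      Polynomial.aeval a q = 0 → q.coeff 0 = 0 ∧ a * Polynomial.aeval a q.divX = 0 := by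
    intro q hqa
    have hrepr := Polynomial.X_mul_divX_add q
    have heval : a * Polynomial.aeval a q.divX + ((q.coeff 0 : D)) = 0 := by
      have e1 : Polynomial.aeval a (Polynomial.X * q.divX + Polynomial.C (q.coeff 0))
          = a * Polynomial.aeval a q.divX + ((q.coeff 0 : D)) := by
        simp only [map_add, map_mul, Polynomial.aeval_X, Polynomial.aeval_C]
        rfl
      rw [← e1, hrepr]
      exact hqa
    -- image of coeff 0 under quotient map is 0
    have hc : (q.coeff 0 : D) ∈ (MvPolynomial.aeval y : MvPolynomial (Fin k) K →ₐ[K] D).range := by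
      rw [← Algebra.adjoin_range_eq_range_aeval]
      exact (q.coeff 0).2
    obtain ⟨P, hP⟩ := hc
    have hπ : Ideal.Quotient.mkₐ K p ((q.coeff 0 : D)) = 0 := by
      have := congrArg (Ideal.Quotient.mkₐ K p) heval
      have hπa : Ideal.Quotient.mkₐ K p a = 0 := Ideal.Quotient.eq_zero_iff_mem.2 ha
      simp only [map_add, map_mul, hπa, zero_mul, map_zero] at this
      simpa using this
    have hPz : P = 0 := by
      apply hy.eq_zero_of_aeval_eq_zero
      rw [← hP] at hπ
      rw [← hπ]
      exact (comp_aeval_apply (f := y) (Ideal.Quotient.mkₐ K p) P).symm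
    have hc0 : (q.coeff 0 : D) = 0 := by rw [← hP, hPz, map_zero]
    constructor
    · exact Subtype.ext hc0
    · rw [hc0, add_zero] at heval; exact heval
  intro n
  induction n with
  | zero =>
    intro q hq0 hqa
    obtain ⟨h1, _⟩ := hcoeff0 q hqa
    have : q = Polynomial.C (q.coeff 0) := Polynomial.eq_C_of_natDegree_le_zero hq0
    rw [this, h1, map_zero]
  | succ n ih =>
    intro q hq hqa
    obtain ⟨h1, h2⟩ := hcoeff0 q hqa
    have hdvx : Polynomial.aeval a q.divX = 0 := by
      rcases mul_eq_zero.1 h2 with h | h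
      · exact absurd h ha0
      · exact h
    have hdeg : q.divX.natDegree ≤ n := by
      rw [Polynomial.natDegree_divX_eq_natDegree_tsub_one]
      omega
    have hdz := ih q.divX hdeg hdvx
    have hrepr := (Polynomial.X_mul_divX_add q).symm
    rw [hrepr, hdz, h1]
    simp

theorem exists_indep_of_chain {K : Type u} [Field K] :
    ∀ (k : ℕ) (B : Type v) (_ : CommRing B) (_ : Algebra K B)
      (p : Fin (k+1) → Ideal B) (_ : ∀ i, (p i).IsPrime) (_ : StrictMono p),
      ∃ f : Fin k → B, AlgebraicIndependent K f := by
  intro k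
  induction k with
  | zero =>
    intro B _ _ p hp _
    refine ⟨Fin.elim0, ?_⟩
    have hnt : Nontrivial B := by
      by_contra hs
      rw [not_nontrivial_iff_subsingleton] at hs
      exact (hp 0).1 (Subsingleton.elim _ _)
    exact algebraicIndependent_empty_type_iff.2 (RingHom.injective (algebraMap K B))
  | succ k ih =>
    intro B _ _ p hp hmono
    -- quotient by p 0
    set q0 : Ideal B := p 0 with hq0
    haveI : (q0).IsPrime := hp 0
    set D := B ⧸ q0 with hD
    let π0 : B →ₐ[K] D := Ideal.Quotient.mkₐ K q0
    haveI : IsDomain D := Ideal.Quotient.isDomain q0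
    have hker0 : RingHom.ker (Ideal.Quotient.mk q0) = q0 := Ideal.mk_ker
    have h01 : q0 < p 1 := hmono (by norm_num : (0 : Fin (k+2)) < 1)
    -- the image prime q1
    set q1 : Ideal D := (p 1).map (Ideal.Quotient.mk q0) with hq1
    haveI hq1p : q1.IsPrime := by
      refine Ideal.map_isPrime_of_surjective Ideal.Quotient.mk_surjective ?_
      rw [hker0]; exact le_of_lt h01
    -- element a
    obtain ⟨x, hx1, hx0⟩ := SetLike.exists_of_lt h01
    set a : D := Ideal.Quotient.mk q0 x with ha
    have haq1 : a ∈ q1 := Ideal.mem_map_of_mem _ hx1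
    have ha0 : a ≠ 0 := fun h => hx0 (Ideal.Quotient.eq_zero_iff_mem.1 h)
    -- chain in D ⧸ q1
    let ρ : B →+* (D ⧸ q1) := (Ideal.Quotient.mk q1).comp (Ideal.Quotient.mk q0)
    have hρsurj : Function.Surjective ρ :=
      (Ideal.Quotient.mk_surjective).comp Ideal.Quotient.mk_surjective
    have hkerρ : RingHom.ker ρ = p 1 := by
      have : RingHom.ker ρ = Ideal.comap (Ideal.Quotient.mk q0) (RingHom.ker (Ideal.Quotient.mk q1)) := by
        rw [RingHom.ker_eq_comap_bot, RingHom.ker_eq_comap_bot, Ideal.comap_comap]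
      rw [this, Ideal.mk_ker, hq1, Ideal.comap_map_of_surjective _ Ideal.Quotient.mk_surjective,
        ← RingHom.ker_eq_comap_bot, hker0]
      exact sup_eq_left.2 (le_of_lt h01)
    have hkerρ_le : ∀ i : Fin (k+1), RingHom.ker ρ ≤ p i.succ := by
      intro i
      rw [hkerρ]
      exact hmono.monotone (by
        rw [← Fin.succ_zero_eq_one]
        exact Fin.succ_le_succ_iff.2 (Fin.zero_le i))
    set r : Fin (k+1) → Ideal (D ⧸ q1) := fun i => (p i.succ).map ρ with hr
    have hrp : ∀ i, (r i).IsPrime := by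
      intro i
      haveI := hp i.succ
      exact Ideal.map_isPrime_of_surjective hρsurj (hkerρ_le i)
    have hcomap : ∀ i, Ideal.comap ρ (r i) = p i.succ := by
      intro i
      rw [hr, Ideal.comap_map_of_surjective _ hρsurj, ← RingHom.ker_eq_comap_bot]
      exact sup_eq_left.2 (hkerρ_le i)
    have hrmono : StrictMono r := by
      intro i j hij
      constructor
      · exact Ideal.map_mono (hmono.monotone (Fin.succ_le_succ_iff.2 (le_of_lt hij)))
      · intro hle
        have : p j.succ ≤ p i.succ := by
          rw [← hcomap i, ← hcomap j]
          exact Ideal.comap_mono hle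
        exact absurd (hmono (Fin.succ_lt_succ_iff.2 hij)) (not_lt_of_ge this)
    obtain ⟨g, hg⟩ := ih (D ⧸ q1) inferInstance inferInstance r hrp hrmono
    -- lift g to D
    let π1 : D →ₐ[K] D ⧸ q1 := Ideal.Quotient.mkₐ K q1
    have hπ1surj : Function.Surjective π1 := Ideal.Quotient.mk_surjective
    choose y hy using fun i => hπ1surj (g i)
    have hgy : AlgebraicIndependent K (π1 ∘ y) := by
      have : π1 ∘ y = g := funext hy
      rw [this]; exact hg
    have hopt : AlgebraicIndependent K (fun o : Option (Fin k) => o.elim a y) :=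
      indep_option q1 y hgy a haq1 ha0
    -- pull back to B
    have hπ0surj : Function.Surjective π0 := Ideal.Quotient.mk_surjective
    choose z hz using fun o : Option (Fin k) => hπ0surj (o.elim a y)
    have hzind : AlgebraicIndependent K z := by
      apply AlgebraicIndependent.of_comp π0
      have : π0 ∘ z = fun o : Option (Fin k) => o.elim a y := funext hz
      rw [this]; exact hopt
    exact ⟨z ∘ finSuccEquiv k, hzind.comp _ (finSuccEquiv k).injective⟩

theorem ringKrullDim_le_of_algInj {K : Type u} [Field K] {R : Type u} [CommRing R] [Algebra K R]
    {m : ℕ} (φ : R →ₐ[K] MvPolynomial (Fin m) K) (hφ : Function.Injective φ) :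
    ringKrullDim R ≤ (m : WithBot (WithTop ℕ)) := by
  rw [ringKrullDim, Order.krullDim]
  refine iSup_le fun s => ?_
  have hlen : s.length ≤ m := by
    by_contra hlt
    push_neg at hlt
    obtain ⟨f, hf⟩ := exists_indep_of_chain (K := K) s.length R inferInstance inferInstance
      (fun i => (s i).asIdeal) (fun i => (s i).2)
      (fun i j hij => (PrimeSpectrum.asIdeal_lt_asIdeal _ _).2 (s.strictMono hij))
    have h2 : AlgebraicIndependent K (φ ∘ f) := hf.map' hφ
    have h3 : AlgebraicIndependent K ((φ ∘ f) ∘ (Fin.castLE hlt)) :=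
      h2.comp _ (Fin.castLE_injective hlt)
    exact not_algIndep_succ m _ h3
  exact Nat.mono_cast hlen


end P2



end Stmt12Aux

end AuxStmt12

open Stmt12Aux

/-- The monic polynomial `P_b = T^n + b_{n−1}T^{n−1} + ⋯ + b_0` with coefficient vector
`b ∈ A^n`. -/
noncomputable def Pb {K : Type*} [Field K] (n : ℕ) (b : Fin n → K) : Polynomial K :=
  Polynomial.X ^ n + ∑ k : Fin n, Polynomial.C (b k) * Polynomial.X ^ (k : ℕ)

/-- The set of coefficient vectors `b ∈ A^n` for which `P_b` has a root of multiplicity at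
least three is contained in a closed subvariety of `A^n` of codimension 2. -/
theorem stmt12 (K : Type*) [Field K] [IsAlgClosed K] (n : ℕ) :
    ∃ W : Set (Fin n → K),
      (∃ I : Ideal (MvPolynomial (Fin n) K), W = MvPolynomial.zeroLocus K I) ∧
      {b : Fin n → K | ∃ u : K, (Polynomial.X - Polynomial.C u) ^ 3 ∣ Pb n b} ⊆ W ∧
      ringKrullDim (MvPolynomial (Fin n) K ⧸ MvPolynomial.vanishingIdeal K W) + 2
        ≤ (n : WithBot (WithTop ℕ)) := by
  classical
  have hPbmon : ∀ (d : ℕ) (b : Fin d → K), Pb d b = mon d b := fun _ _ => rfl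
  by_cases hn : n ≤ 2
  · refine ⟨∅, ⟨⊤, by rw [MvPolynomial.zeroLocus_top]; rfl⟩, ?_, ?_⟩
    · rintro b ⟨u, hu⟩
      exfalso
      have h0 : Pb n b ≠ 0 := (hPbmon n b ▸ (mon_monic n b).ne_zero)
      have h1 := Polynomial.natDegree_le_of_dvd hu h0
      rw [Polynomial.natDegree_pow, Polynomial.natDegree_X_sub_C, hPbmon, mon_natDegree] at h1
      omega
    · rw [MvPolynomial.vanishingIdeal_empty]
      haveI : Subsingleton (MvPolynomial (Fin n) K ⧸ (⊤ : Ideal (MvPolynomial (Fin n) K))) :=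
        Ideal.Quotient.subsingleton_iff.2 rfl
      rw [ringKrullDim_eq_bot_of_subsingleton, WithBot.bot_add]
      exact bot_le
  · obtain ⟨m, rfl⟩ : ∃ m, n = m + 3 := ⟨n - 3, by omega⟩
    set T := MvPolynomial (Fin (m+1)) K with hT
    set G : Polynomial T :=
      (Polynomial.X - Polynomial.C (MvPolynomial.X 0))^3 *
        mon m (fun i => MvPolynomial.X i.succ) with hG
    have hGmonic : G.Monic :=
      Polynomial.Monic.mul ((Polynomial.monic_X_sub_C _).pow 3) (mon_monic _ _)
    set φ : MvPolynomial (Fin (m+3)) K →ₐ[K] T :=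
      MvPolynomial.aeval (fun k : Fin (m+3) => G.coeff k) with hφ
    set J : Ideal (MvPolynomial (Fin (m+3)) K) := RingHom.ker φ with hJ
    refine ⟨MvPolynomial.zeroLocus K J, ⟨J, rfl⟩, ?_, ?_⟩
    · rintro b ⟨u₀, Q, hQ⟩
      have hPb : (Pb (m+3) b).Monic := hPbmon _ b ▸ mon_monic _ b
      have hPbdeg : (Pb (m+3) b).natDegree = m + 3 := hPbmon _ b ▸ mon_natDegree _ b
      have hQmonic : Q.Monic := by
        refine Polynomial.Monic.of_mul_monic_left ((Polynomial.monic_X_sub_C u₀).pow 3) ?_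
        rw [← hQ]; exact hPb
      have hQdeg : Q.natDegree = m := by
        have h2 := congrArg Polynomial.natDegree hQ
        rw [hPbdeg, Polynomial.Monic.natDegree_mul ((Polynomial.monic_X_sub_C u₀).pow 3) hQmonic,
          Polynomial.natDegree_pow, Polynomial.natDegree_X_sub_C] at h2
        omega
      set vals : Fin (m+1) → K := Fin.cases u₀ (fun i => Q.coeff i) with hvals
      set ev : T →ₐ[K] K := MvPolynomial.aeval vals with hev
      have hmapG : G.map (ev : T →+* K) = Pb (m+3) b := by
        rw [hG, Polynomial.map_mul, Polynomial.map_pow, Polynomial.map_sub,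
          Polynomial.map_X, Polynomial.map_C, mon_map]
        have e0 : (ev : T →+* K) (MvPolynomial.X 0) = u₀ := by
          show ev (MvPolynomial.X 0) = u₀
          rw [hev, MvPolynomial.aeval_X, hvals]
          exact Fin.cases_zero
        have es : ∀ i : Fin m, (ev : T →+* K) (MvPolynomial.X i.succ) = Q.coeff i := by
          intro i
          show ev (MvPolynomial.X i.succ) = Q.coeff i
          rw [hev, MvPolynomial.aeval_X, hvals]
          exact Fin.cases_succ _
        rw [e0]
        have : (fun k : Fin m => (ev : T →+* K) (MvPolynomial.X k.succ)) =
            (fun k : Fin m => Q.coeff k) := funext es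
        rw [this, ← monic_eq_mon m hQmonic hQdeg, ← hQ]
      have hcomp : ev.comp φ = (MvPolynomial.aeval b : MvPolynomial (Fin (m+3)) K →ₐ[K] K) := by
        apply MvPolynomial.algHom_ext
        intro k
        rw [AlgHom.comp_apply, hφ, MvPolynomial.aeval_X, MvPolynomial.aeval_X]
        have : ev (G.coeff k) = (G.map (ev : T →+* K)).coeff k := (Polynomial.coeff_map _ _).symm
        rw [this, hmapG, hPbmon, mon_coeff_lt]
      intro p hp
      have hφp : φ p = 0 := hp
      have : MvPolynomial.aeval b p = 0 := by
        rw [← hcomp, AlgHom.comp_apply, hφp, map_zero]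
      exact this
    · have hJle : J ≤ MvPolynomial.vanishingIdeal K (MvPolynomial.zeroLocus K J) :=
        MvPolynomial.le_vanishingIdeal_zeroLocus (K := K) J
      have hsurj : Function.Surjective (Ideal.Quotient.factor hJle) := by
        intro y
        obtain ⟨a, rfl⟩ := Ideal.Quotient.mk_surjective y
        exact ⟨Ideal.Quotient.mk J a, Ideal.Quotient.factor_mk hJle a⟩
      have h1 := ringKrullDim_le_of_surjective _ hsurj
      have h2 : ringKrullDim (MvPolynomial (Fin (m+3)) K ⧸ J) ≤ ((m+1 : ℕ) : WithBot (WithTop ℕ)) :=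
        ringKrullDim_le_of_algInj (Ideal.kerLiftAlg φ) (Ideal.kerLiftAlg_injective φ)
      have h3 := (h1.trans h2)
      have h4 := add_le_add_left h3 2
      refine h4.trans ?_
      have : ((m+1 : ℕ) : WithBot (WithTop ℕ)) + 2 = ((m+3 : ℕ) : WithBot (WithTop ℕ)) := by
        push_cast; ring
      exact this.le
end

section
/- Let A be the set of monic polynomials f = T^n + a_{n−1}T^{n−1} + ⋯ + a_0 in F_q[T] satisfying m independent F_q-linear conditions L_j(a_r, …, a_{n−1}) + α_j = 0 (1 ≤ j ≤ m), with q > n. Then the number of non-square-free polynomials in A is at most n(n−1)·q^{n−m−1}. -/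
open Polynomial Finset

set_option linter.unusedSectionVars false
set_option linter.unusedVariables false



/-- Counting solutions of a linear system with independent rows. -/
lemma aff_count {Fq : Type*} [Field Fq] [Fintype Fq] {n s : ℕ}
    (M : Fin s → Fin n → Fq) (hM : LinearIndependent Fq M) (β : Fin s → Fq)
    (S : Finset (Fin n → Fq)) (hS : ∀ a ∈ S, ∀ j, ∑ k, M j k * a k = β j) :
    S.card ≤ Fintype.card Fq ^ (n - s) := by
  classical
  set Φ : (Fin n → Fq) →ₗ[Fq] (Fin s → Fq) := Matrix.mulVecLin (Matrix.of M) with hΦdef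
  have hΦ : ∀ a : Fin n → Fq, ∀ j, Φ a j = ∑ k, M j k * a k := by
    intro a j
    simp [hΦdef, Matrix.mulVecLin, Matrix.mulVec, dotProduct]
  have hker : Module.finrank Fq (LinearMap.ker Φ) = n - s := by
    have h1 : Module.finrank Fq (LinearMap.range Φ) +
        Module.finrank Fq (LinearMap.ker Φ) = n := by
      have := LinearMap.finrank_range_add_finrank_ker Φ
      simpa using this
    have h2 : Module.finrank Fq (LinearMap.range Φ) = s := by
      have : (Matrix.of M).rank = Fintype.card (Fin s) := hM.rank_matrix
      simpa [Matrix.rank] using this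
    omega
  have hcard : Fintype.card (LinearMap.ker Φ) = Fintype.card Fq ^ (n - s) := by
    rw [Module.card_eq_pow_finrank (K := Fq), hker]
  rcases S.eq_empty_or_nonempty with he | ⟨a₀, ha₀⟩
  · simp [he]
  · have ha₀' := hS a₀ ha₀
    calc S.card
        ≤ (Finset.univ.filter (fun v : Fin n → Fq => v ∈ LinearMap.ker Φ)).card := by
          apply Finset.card_le_card_of_injOn (fun a => a - a₀)
          · intro a ha
            have ha' := hS a ha
            simp only [Finset.mem_coe, Finset.mem_filter, Finset.mem_univ, true_and, LinearMap.mem_ker]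
            rw [map_sub, sub_eq_zero]
            funext j
            rw [hΦ, hΦ, ha' j, ha₀' j]
          · intro x _ y _ h
            simpa using congrArg (· + a₀) h
      _ = Fintype.card (LinearMap.ker Φ) := by
          rw [Fintype.card_subtype]
      _ = Fintype.card Fq ^ (n - s) := hcard

section PolyHelpers
variable {Fq : Type*} [Field Fq] [Fintype Fq]

lemma coeff_sum_lt {n : ℕ} (a : Fin n → Fq) (i : ℕ) (h : i < n) :
    (∑ k : Fin n, C (a k) * X ^ (k : ℕ)).coeff i = a ⟨i, h⟩ := by
  rw [Polynomial.finset_sum_coeff]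
  rw [Finset.sum_eq_single (⟨i, h⟩ : Fin n)]
  · simp [coeff_X_pow]
  · intro b _ hb
    simp only [coeff_C_mul, coeff_X_pow, mul_ite, mul_one, mul_zero, ite_eq_right_iff]
    intro hib
    exact absurd (Fin.ext hib.symm) hb
  · simp

lemma coeff_sum_ge {n : ℕ} (a : Fin n → Fq) (i : ℕ) (h : n ≤ i) :
    (∑ k : Fin n, C (a k) * X ^ (k : ℕ)).coeff i = 0 := by
  rw [Polynomial.finset_sum_coeff]
  apply Finset.sum_eq_zero
  intro k _
  simp only [coeff_C_mul, coeff_X_pow, mul_ite, mul_one, mul_zero, ite_eq_right_iff]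
  intro hik
  omega

lemma Pp_ne_zero {n : ℕ} (a : Fin n → Fq) :
    (X ^ n + ∑ k : Fin n, C (a k) * X ^ (k : ℕ)) ≠ 0 := by
  intro h
  have := congrArg (fun p => Polynomial.coeff p n) h
  simp only [coeff_add, coeff_X_pow, if_pos rfl, coeff_zero] at this
  rw [coeff_sum_ge a n le_rfl] at this
  simp at this

lemma Pp_natDegree_le {n : ℕ} (a : Fin n → Fq) :
    (X ^ n + ∑ k : Fin n, C (a k) * X ^ (k : ℕ)).natDegree ≤ n := by
  apply (Polynomial.natDegree_add_le _ _).trans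
  simp only [natDegree_X_pow, max_le_iff, le_refl, true_and]
  apply Polynomial.natDegree_sum_le_of_forall_le
  intro k _
  exact (Polynomial.natDegree_C_mul_le _ _).trans (by simp [Fin.is_le'])

/-- Common root of `f` and its derivative in the algebraic closure. -/
lemma exists_common_root {f : Polynomial Fq} (hf : f ≠ 0) (hsf : ¬ Squarefree f) :
    ∃ y : AlgebraicClosure Fq, (aeval y) f = 0 ∧ (aeval y) (derivative f) = 0 := by
  rw [Squarefree] at hsf
  push_neg at hsf
  obtain ⟨x, hdvd, hxu⟩ := hsf
  obtain ⟨c, hc⟩ := hdvd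
  have hdx : x.degree ≠ 0 := fun h => hxu (Polynomial.isUnit_iff_degree_eq_zero.mpr h)
  set K := AlgebraicClosure Fq
  have hmap : (x.map (algebraMap Fq K)).degree ≠ 0 := by
    rwa [Polynomial.degree_map]
  obtain ⟨y, hy⟩ := IsAlgClosed.exists_root _ hmap
  have hyx : (aeval y) x = 0 := by
    rwa [Polynomial.aeval_def, ← Polynomial.eval_map]
  refine ⟨y, ?_, ?_⟩
  · rw [hc]
    simp [hyx]
  · have hxd : x ∣ derivative f := by
      rw [hc, derivative_mul, derivative_mul]
      exact dvd_add ((dvd_add (dvd_mul_left x _) (dvd_mul_right x _)).mul_right c)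
        ((dvd_mul_right x x).mul_right _)
    obtain ⟨d, hd⟩ := hxd
    rw [hd, map_mul, hyx, zero_mul]

end PolyHelpers

section FB
variable {Fq : Type*} [Field Fq] [Fintype Fq]

/-- Fiber bound: with the coefficient of `T` nonzero, at most `n-1` choices of constant
term give a non-squarefree polynomial. -/
lemma fiber_bound {n : ℕ} (hn : 4 ≤ n) (b : Fin n → Fq) (hb : b ⟨1, by omega⟩ ≠ 0)
    (T : Finset Fq)
    (hT : ∀ c ∈ T, ¬ Squarefree (X ^ n +
        ∑ k : Fin n, C (Function.update b ⟨0, by omega⟩ c k) * X ^ (k : ℕ))) :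
    T.card ≤ n - 1 := by
  classical
  set i0 : Fin n := ⟨0, by omega⟩ with hi0
  set i1 : Fin n := ⟨1, by omega⟩ with hi1
  set g : Polynomial Fq :=
    X ^ n + ∑ k : Fin n, C (Function.update b i0 0 k) * X ^ (k : ℕ) with hg
  have key : ∀ c : Fq,
      X ^ n + ∑ k : Fin n, C (Function.update b i0 c k) * X ^ (k : ℕ) = g + C c := by
    intro c
    rw [hg, add_assoc]
    congr 1
    ext i
    rw [coeff_add, coeff_C]
    by_cases h : i < n
    · rw [coeff_sum_lt _ i h, coeff_sum_lt _ i h]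
      by_cases h0 : i = 0
      · subst h0
        have : (⟨0, by omega⟩ : Fin n) = i0 := rfl
        rw [this, Function.update_self, Function.update_self]
        simp
      · have hne : (⟨i, h⟩ : Fin n) ≠ i0 := by
          simp only [hi0, Ne, Fin.mk.injEq]; exact h0
        rw [Function.update_of_ne hne, Function.update_of_ne hne, if_neg h0, add_zero]
    · rw [coeff_sum_ge _ i (by omega), coeff_sum_ge _ i (by omega), if_neg (by omega)]
      simp
  have hg1 : g.coeff 1 = b i1 := by
    rw [hg, coeff_add, coeff_X_pow, if_neg (by omega), coeff_sum_lt _ 1 (by omega),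
      zero_add]
    have : (⟨1, by omega⟩ : Fin n) ≠ i0 := by simp [hi0]
    rw [Function.update_of_ne this]
  have hdg : derivative g ≠ 0 := by
    intro h
    have := congrArg (fun p => Polynomial.coeff p 0) h
    simp only [Polynomial.coeff_derivative, coeff_zero] at this
    rw [hg1] at this
    simp at this
    exact hb this
  have hdgdeg : (derivative g).natDegree ≤ n - 1 :=
    (natDegree_derivative_le g).trans (Nat.sub_le_sub_right (Pp_natDegree_le _) 1)
  set K := AlgebraicClosure Fq
  set R := ((derivative g).map (algebraMap Fq K)).roots.toFinset with hR
  have hRcard : R.card ≤ n - 1 := by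
    calc R.card ≤ Multiset.card ((derivative g).map (algebraMap Fq K)).roots :=
          Multiset.toFinset_card_le _
      _ ≤ ((derivative g).map (algebraMap Fq K)).natDegree := Polynomial.card_roots' _
      _ = (derivative g).natDegree := Polynomial.natDegree_map _
      _ ≤ n - 1 := hdgdeg
  have hex : ∀ c ∈ T, ∃ y : K, (aeval y) (g + C c) = 0 ∧ (aeval y) (derivative g) = 0 := by
    intro c hc
    have h1 : ¬ Squarefree (g + C c) := by rw [← key c]; exact hT c hc
    have h0 : g + C c ≠ 0 := by rw [← key c]; exact Pp_ne_zero _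
    have h2 := exists_common_root h0 h1
    simpa [derivative_add, derivative_C] using h2
  choose ρ hρ1 hρ2 using hex
  set F : Fq → K := fun c => if h : c ∈ T then ρ c h else 0 with hF
  calc T.card ≤ R.card := by
        apply Finset.card_le_card_of_injOn F
        · intro c hc
          rw [hR, Finset.mem_coe, Multiset.mem_toFinset, Polynomial.mem_roots
            ((Polynomial.map_ne_zero_iff (algebraMap Fq K).injective).mpr hdg)]
          rw [Polynomial.IsRoot, Polynomial.eval_map, ← Polynomial.aeval_def]
          simp only [hF, dif_pos (Finset.mem_coe.mp hc)]
          exact hρ2 c hc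
        · intro c hc c' hc' h
          have hcT : c ∈ T := hc
          have hc'T : c' ∈ T := hc'
          simp only [hF] at h
          rw [dif_pos hcT, dif_pos hc'T] at h
          have e1 := hρ1 c hcT
          have e2 := hρ1 c' hc'T
          rw [h] at e1
          rw [map_add, aeval_C] at e1 e2
          have : (algebraMap Fq K) c = (algebraMap Fq K) c' := by
            have := e1.trans e2.symm
            linear_combination this
          exact (algebraMap Fq K).injective this
    _ ≤ n - 1 := hRcard

end FB

/-- Let `A` be the set of monic polynomials `f = T^n + a_{n−1}T^{n−1} + ⋯ + a_0` over
`F_q` satisfying `m` independent linear conditions `L_j(a_r,…,a_{n−1}) + α_j = 0`, with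
`q > n` and `3 ≤ r ≤ n − m`. Then the number of non-square-free elements of `A` is at
most `n(n−1) q^{n−m−1}`. -/
theorem stmt14 (Fq : Type*) [Field Fq] [Fintype Fq] (n m r : ℕ)
    (hq : n < Fintype.card Fq) (hr : 3 ≤ r) (hrnm : r ≤ n - m) (hm : 0 < m)
    (L : Fin m → Fin n → Fq) (hL : LinearIndependent Fq L)
    (hsupp : ∀ j, ∀ k : Fin n, (k : ℕ) < r → L j k = 0)
    (α : Fin m → Fq) :
    Set.ncard {a : Fin n → Fq |
        (∀ j, ∑ k, L j k * a k + α j = 0) ∧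
        ¬ Squarefree (Polynomial.X ^ n +
            ∑ k : Fin n, Polynomial.C (a k) * Polynomial.X ^ (k : ℕ)) }
      ≤ n * (n - 1) * Fintype.card Fq ^ (n - m - 1) := by
  classical
  have hn4 : 4 ≤ n := by omega
  set q := Fintype.card Fq with hqdef
  set i0 : Fin n := ⟨0, by omega⟩ with hi0
  set i1 : Fin n := ⟨1, by omega⟩ with hi1
  set S : Finset (Fin n → Fq) := Finset.univ.filter (fun a =>
      (∀ j, ∑ k, L j k * a k + α j = 0) ∧
      ¬ Squarefree (X ^ n + ∑ k : Fin n, C (a k) * X ^ (k : ℕ))) with hSdef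
  have hncard : Set.ncard {a : Fin n → Fq |
      (∀ j, ∑ k, L j k * a k + α j = 0) ∧
      ¬ Squarefree (X ^ n + ∑ k : Fin n, C (a k) * X ^ (k : ℕ))} = S.card := by
    rw [← Set.ncard_coe_finset]
    congr 1
    ext a
    simp [hSdef]
  rw [hncard]
  -- the standard "coordinate" vectors
  set e : Fin n → Fin n → Fq := fun i k => if k = i then 1 else 0 with he
  have hesum : ∀ (a : Fin n → Fq) (i : Fin n), ∑ k, e i k * a k = a i := by
    intro a i
    simp [he, ite_mul, Finset.sum_ite_eq']
  have hind : ∀ i : Fin n, (i : ℕ) < r →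
      LinearIndependent Fq (Fin.cons (e i) L : Fin (m + 1) → Fin n → Fq) := by
    intro i hi
    rw [linearIndependent_fin_cons]
    refine ⟨hL, fun hmem => ?_⟩
    have hle : Submodule.span Fq (Set.range L) ≤
        LinearMap.ker (LinearMap.proj i : (Fin n → Fq) →ₗ[Fq] Fq) := by
      rw [Submodule.span_le]
      rintro _ ⟨j, rfl⟩
      simp [LinearMap.mem_ker, hsupp j i hi]
    have := hle hmem
    simp [LinearMap.mem_ker, he] at this
  -- the two parts
  have h0r : (i0 : ℕ) < r := lt_of_lt_of_le (by norm_num) hr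
  have h1r : (i1 : ℕ) < r := lt_of_lt_of_le (by norm_num) hr
  set S0 : Finset (Fin n → Fq) := S.filter (fun a => a i1 = 0) with hS0
  set S1 : Finset (Fin n → Fq) := S.filter (fun a => ¬ a i1 = 0) with hS1
  have hsplit : S0.card + S1.card = S.card :=
    Finset.card_filter_add_card_filter_not _
  -- bound on S0
  have hS0card : S0.card ≤ q ^ (n - (m + 1)) := by
    apply aff_count (Fin.cons (e i1) L) (hind i1 h1r)
      (Fin.cons 0 (fun j => -α j))
    intro a ha j
    have haS : a ∈ S := (Finset.mem_filter.mp ha).1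
    have ha1 : a i1 = 0 := (Finset.mem_filter.mp ha).2
    have hcond : ∀ j, ∑ k, L j k * a k + α j = 0 :=
      ((Finset.mem_filter.mp haS).2).1
    refine Fin.cases ?_ (fun j => ?_) j
    · simpa [hesum a i1] using ha1
    · simp only [Fin.cons_succ]
      exact eq_neg_of_add_eq_zero_left (hcond j)
  -- bound on S1
  set φ : (Fin n → Fq) → (Fin n → Fq) := fun a => Function.update a i0 0 with hφ
  set T1 : Finset (Fin n → Fq) := Finset.univ.filter (fun bb =>
      (∀ j, ∑ k, L j k * bb k + α j = 0) ∧ bb i0 = 0) with hT1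
  have hLsum : ∀ (a : Fin n → Fq) j, ∑ k, L j k * φ a k = ∑ k, L j k * a k := by
    intro a j
    refine Finset.sum_congr rfl fun k _ => ?_
    by_cases hk : k = i0
    · rw [hk, hsupp j i0 h0r]
      ring
    · rw [hφ]
      simp only [Function.update_of_ne hk]
  have hmaps : ∀ a ∈ S1, φ a ∈ T1 := by
    intro a ha
    have haS : a ∈ S := (Finset.mem_filter.mp ha).1
    have hcond : ∀ j, ∑ k, L j k * a k + α j = 0 :=
      ((Finset.mem_filter.mp haS).2).1
    rw [hT1, Finset.mem_filter]
    refine ⟨Finset.mem_univ _, fun j => ?_, ?_⟩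
    · rw [hLsum a j]; exact hcond j
    · simp [hφ]
  have hT1card : T1.card ≤ q ^ (n - (m + 1)) := by
    apply aff_count (Fin.cons (e i0) L) (hind i0 h0r)
      (Fin.cons 0 (fun j => -α j))
    intro a ha j
    have h1 : ∀ j, ∑ k, L j k * a k + α j = 0 := ((Finset.mem_filter.mp ha).2).1
    have h2 : a i0 = 0 := ((Finset.mem_filter.mp ha).2).2
    refine Fin.cases ?_ (fun j => ?_) j
    · simpa [hesum a i0] using h2
    · simp only [Fin.cons_succ]
      exact eq_neg_of_add_eq_zero_left (h1 j)
  have hfib : ∀ bb ∈ T1, (S1.filter (fun a => φ a = bb)).card ≤ n - 1 := by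
    intro bb hbb
    rcases (S1.filter (fun a => φ a = bb)).eq_empty_or_nonempty with hemp | ⟨a, ha⟩
    · simp [hemp]
    · have haf := Finset.mem_filter.mp ha
      have haS1 : a ∈ S1 := haf.1
      have haφ : φ a = bb := haf.2
      have ha1 : a i1 ≠ 0 := (Finset.mem_filter.mp haS1).2
      have hb1 : bb ⟨1, lt_of_lt_of_le (by norm_num) hn4⟩ ≠ 0 := by
        rw [← haφ, hφ]
        show Function.update a i0 0 i1 ≠ 0
        rwa [Function.update_of_ne (by simp [hi0, hi1])]
      -- general fact: every element of the fiber is `update bb i0 (its 0-coordinate)`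
      have hrec : ∀ x ∈ S1.filter (fun a => φ a = bb),
          Function.update bb i0 (x i0) = x := by
        intro x hx
        have hxφ : φ x = bb := (Finset.mem_filter.mp hx).2
        funext k
        by_cases hk : k = i0
        · subst hk; simp
        · rw [Function.update_of_ne hk, ← hxφ, hφ]
          simp only [Function.update_of_ne hk]
      have himg : ((S1.filter (fun a => φ a = bb)).image (fun a => a i0)).card
          = (S1.filter (fun a => φ a = bb)).card := by
        apply Finset.card_image_of_injOn
        intro x hx y hy hxy
        have hxy' : x i0 = y i0 := hxy
        have h1 := hrec x hx
        have h2 := hrec y hy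
        rw [← h1, ← h2, hxy']
      rw [← himg]
      apply fiber_bound hn4 bb hb1
      intro c hc
      obtain ⟨x, hx, hxc⟩ := Finset.mem_image.mp hc
      have hxS : x ∈ S := (Finset.mem_filter.mp ((Finset.mem_filter.mp hx).1)).1
      have hnsf : ¬ Squarefree (X ^ n + ∑ k : Fin n, C (x k) * X ^ (k : ℕ)) :=
        ((Finset.mem_filter.mp hxS).2).2
      have : Function.update bb (⟨0, lt_of_lt_of_le (by norm_num) hn4⟩ : Fin n) c = x := by
        rw [show (⟨0, lt_of_lt_of_le (by norm_num) hn4⟩ : Fin n) = i0 from rfl, ← hxc]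
        exact hrec x hx
      rw [this]
      exact hnsf
  have hS1card : S1.card ≤ (n - 1) * T1.card :=
    Finset.card_le_mul_card_image_of_maps_to hmaps (n - 1) hfib
  -- put everything together
  have hpow : n - (m + 1) = n - m - 1 := (Nat.sub_sub n m 1).symm
  calc S.card = S0.card + S1.card := hsplit.symm
    _ ≤ q ^ (n - m - 1) + (n - 1) * (q ^ (n - m - 1)) := by
        refine Nat.add_le_add (hpow ▸ hS0card) ?_
        refine hS1card.trans ?_
        exact Nat.mul_le_mul_left _ (hpow ▸ hT1card)
    _ = n * q ^ (n - m - 1) := by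
        have h1n : 1 + (n - 1) = n := Nat.add_sub_cancel' (le_trans (by norm_num) hn4)
        rw [show q ^ (n - m - 1) + (n - 1) * q ^ (n - m - 1)
            = (1 + (n - 1)) * q ^ (n - m - 1) from by ring, h1n]
    _ ≤ n * (n - 1) * q ^ (n - m - 1) := by
        have h1 : n ≤ n * (n - 1) := Nat.le_mul_of_pos_right n (Nat.sub_pos_of_lt (lt_of_lt_of_le (by norm_num) hn4))
        exact Nat.mul_le_mul_right _ h1
end
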